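/- arXiv:1706.03376 — 2 statements merged into one kernel-verified Lean document; each statement's English description precedes it below -/
import Mathlib

section
/- Let G be a linearly ordered abelian group, H_1 ⊆ H_2 ⊆ … ⊆ H_k convex subgroups of G, and n_1 | n_2 | … | n_k positive integers. Then (n_1H_1 + n_2H_k) ∩ (n_1H_2 + n_3H_k) ∩ … ∩ (n_1H_{k-1} + n_kH_k) = n_1H_1 + n_2H_2 + … + n_kH_k. (The j-th set in the intersection, for 1 ≤ j ≤ k−1, is n_1H_j + n_{j+1}H_k.) -/
/-- `nH = {n • h : h ∈ H}` as a subgroup. -/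
def smulSub {G : Type*} [AddCommGroup G] (n : ℕ) (H : AddSubgroup G) : AddSubgroup G :=
  AddSubgroup.map (n • AddMonoidHom.id G) H

/-- A subgroup `H` of a linearly ordered abelian group is convex if
`0 ≤ g ≤ h` and `h ∈ H` imply `g ∈ H`. -/
def IsConvexSubgroup {G : Type*} [AddCommGroup G] [LinearOrder G] [IsOrderedAddMonoid G] (H : AddSubgroup G) : Prop :=
  ∀ g h : G, 0 ≤ g → g ≤ h → h ∈ H → g ∈ H

/-!
The inclusion `⊇` holds termwise, since `n₁ ∣ n_i` and `n_{j+1} ∣ n_i` for `i > j`. For `⊆`,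
induct on `k`. The last term of the intersection writes `g = n₁a + n_k b` with `a ∈ H_{k-1}`,
`b ∈ H_k`. Comparing with another decomposition `g = n₁a_j + n_{j+1}b_j`, `a_j ∈ H_j`, gives
`n_{j+1}(b_j - (n_k / n_{j+1}) b) = n₁(a - a_j) ∈ H_{k-1}`; a convex subgroup is closed under
taking roots, so `b_j - (n_k / n_{j+1}) b ∈ H_{k-1}`. Hence `n₁a` lies in the intersection
built from `H_1, …, H_{k-1}` and, by induction, in `n₁H_1 + ⋯ + n_{k-1}H_{k-1}`.
-/

section

variable {G : Type*} [AddCommGroup G]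

lemma nsmul_mem_smulSub {n : ℕ} {H : AddSubgroup G} {h : G} (hh : h ∈ H) :
    n • h ∈ smulSub n H :=
  ⟨h, hh, rfl⟩

lemma smulSub_le_smulSub {m n : ℕ} (hmn : m ∣ n) {H K : AddSubgroup G} (hHK : H ≤ K) :
    smulSub n H ≤ smulSub m K := by
  rintro _ ⟨h, hh, rfl⟩
  obtain ⟨c, rfl⟩ := hmn
  exact ⟨c • h, K.nsmul_mem (hHK hh) c, (mul_smul m c h).symm⟩

lemma IsConvexSubgroup.mem_of_nsmul_mem [LinearOrder G] [IsOrderedAddMonoid G]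
    {K : AddSubgroup G} (hK : IsConvexSubgroup K) {m : ℕ} (hm : 0 < m) {x : G}
    (hx : m • x ∈ K) : x ∈ K := by
  have of_nonneg : ∀ y : G, 0 ≤ y → m • y ∈ K → y ∈ K := fun y hy hmy =>
    hK y (m • y) hy (by simpa using nsmul_le_nsmul_left hy hm) hmy
  rcases le_total 0 x with hx0 | hx0
  · exact of_nonneg x hx0 hx
  · simpa using K.neg_mem (of_nonneg (-x) (neg_nonneg.2 hx0) (by simpa using K.neg_mem hx))

lemma dvd_of_le_of_forall_dvd_succ {k : ℕ} {n : ℕ → ℕ}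
    (hdvd : ∀ i, i + 1 < k → n i ∣ n (i + 1)) {i j : ℕ} (hij : i ≤ j) (hjk : j < k) :
    n i ∣ n j := by
  induction j, hij using Nat.le_induction with
  | base => rfl
  | succ j _ ih => exact (ih (by omega)).trans (hdvd j hjk)

lemma nsmul_mem_sup_smulSub_of_add_mem {p d e : ℕ} {A K L : AddSubgroup G}
    (hK : ∀ x, d • x ∈ K → x ∈ K) (hAK : A ≤ K) (hde : d ∣ e) {a b : G} (ha : a ∈ K)
    (h : p • a + e • b ∈ smulSub p A ⊔ smulSub d L) :
    p • a ∈ smulSub p A ⊔ smulSub d K := by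
  obtain ⟨_, ⟨a', ha', rfl⟩, _, ⟨c, -, rfl⟩, hsum⟩ := AddSubgroup.mem_sup.1 h
  obtain ⟨m, rfl⟩ := hde
  have hdiff : d • (c - m • b) = p • (a - a') := by
    rw [smul_sub, smul_sub, ← mul_smul, sub_eq_sub_iff_add_eq_add, add_comm]
    exact hsum
  refine AddSubgroup.mem_sup.2 ⟨p • a', nsmul_mem_smulSub ha', d • (c - m • b),
    nsmul_mem_smulSub (hK _ ?_), ?_⟩
  · rw [hdiff]
    exact K.nsmul_mem (K.sub_mem ha (hAK ha')) p
  · rw [hdiff, smul_sub]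
    abel

lemma smulSub_le_iSup {k i : ℕ} (hik : i < k) (n : ℕ → ℕ) (H : ℕ → AddSubgroup G) :
    smulSub (n i) (H i) ≤ ⨆ i ∈ Finset.range k, smulSub (n i) (H i) :=
  le_iSup₂_of_le (f := fun i (_ : i ∈ Finset.range k) => smulSub (n i) (H i)) i
    (Finset.mem_range.2 hik) le_rfl

lemma iSup_smulSub_le_iInf_sup {k : ℕ} {H : ℕ → AddSubgroup G} {n : ℕ → ℕ}
    (hmono : ∀ i j : ℕ, i ≤ j → j < k → H i ≤ H j)
    (hdvd : ∀ i : ℕ, i + 1 < k → n i ∣ n (i + 1)) :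
    ⨆ i ∈ Finset.range k, smulSub (n i) (H i) ≤
      ⨅ j ∈ Finset.range (k - 1), smulSub (n 0) (H j) ⊔ smulSub (n (j + 1)) (H (k - 1)) := by
  refine iSup₂_le fun i hi => le_iInf₂ fun j hj => ?_
  rw [Finset.mem_range] at hi hj
  rcases le_or_gt i j with hij | hji
  · exact le_sup_of_le_left <| smulSub_le_smulSub
      (dvd_of_le_of_forall_dvd_succ hdvd i.zero_le hi) (hmono i j hij (by omega))
  · exact le_sup_of_le_right <| smulSub_le_smulSub
      (dvd_of_le_of_forall_dvd_succ hdvd hji hi) (hmono i (k - 1) (by omega) (by omega))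

lemma iInf_sup_le_iSup_smulSub [LinearOrder G] [IsOrderedAddMonoid G] {k : ℕ}
    {H : ℕ → AddSubgroup G} {n : ℕ → ℕ}
    (hconv : ∀ i < k, IsConvexSubgroup (H i))
    (hmono : ∀ i j : ℕ, i ≤ j → j < k → H i ≤ H j)
    (hpos : ∀ i < k, 0 < n i)
    (hdvd : ∀ i : ℕ, i + 1 < k → n i ∣ n (i + 1)) (m : ℕ) (hmk : m + 1 < k) :
    ⨅ j ∈ Finset.range (m + 1), (smulSub (n 0) (H j) ⊔ smulSub (n (j + 1)) (H (m + 1))) ≤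
      ⨆ i ∈ Finset.range (m + 2), smulSub (n i) (H i) := by
  induction m with
  | zero =>
    refine (iInf₂_le 0 (Finset.self_mem_range_succ 0)).trans (sup_le ?_ ?_)
    exacts [smulSub_le_iSup (by omega) n H, smulSub_le_iSup (by omega) n H]
  | succ m ih =>
    intro g hg
    simp only [AddSubgroup.mem_iInf, Finset.mem_range] at hg
    obtain ⟨_, ⟨a, ha, rfl⟩, _, ⟨b, hb, rfl⟩, rfl⟩ :=
      AddSubgroup.mem_sup.1 (hg (m + 1) (by omega))
    have hlower : n 0 • a ∈
        ⨅ j ∈ Finset.range (m + 1), smulSub (n 0) (H j) ⊔ smulSub (n (j + 1)) (H (m + 1)) :=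
      AddSubgroup.mem_iInf.2 fun j => AddSubgroup.mem_iInf.2 fun hj => by
        rw [Finset.mem_range] at hj
        exact nsmul_mem_sup_smulSub_of_add_mem
          (fun _ => (hconv (m + 1) (by omega)).mem_of_nsmul_mem (hpos (j + 1) (by omega)))
          (hmono j (m + 1) (by omega) (by omega))
          (dvd_of_le_of_forall_dvd_succ hdvd (by omega : j + 1 ≤ m + 2) (by omega)) ha
          (hg j (by omega))
    have hrange : Finset.range (m + 2) ⊆ Finset.range (m + 3) :=
      Finset.range_subset_range.2 (by omega)
    exact add_mem ((ih (by omega)).trans (biSup_mono fun i hi => hrange hi) hlower)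
      (smulSub_le_iSup (by omega) n H (nsmul_mem_smulSub hb))

end

/-- Let `H 0 ⊆ H 1 ⊆ … ⊆ H (k-1)` be convex subgroups of a linearly ordered abelian
group and `n 0 ∣ n 1 ∣ … ∣ n (k-1)` positive integers. Then
`⋂_{j<k-1} (n 0 • H j + n (j+1) • H (k-1)) = n 0 • H 0 + … + n (k-1) • H (k-1)`.
(Here the paper's 1-based indices `1,…,k` are rendered as `0,…,k-1`.) -/
theorem inf_of_sums_eq_sum_of_smul_convex {G : Type*} [AddCommGroup G] [LinearOrder G] [IsOrderedAddMonoid G]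
    (k : ℕ) (hk : 2 ≤ k) (H : ℕ → AddSubgroup G) (n : ℕ → ℕ)
    (hconv : ∀ i < k, IsConvexSubgroup (H i))
    (hmono : ∀ i j : ℕ, i ≤ j → j < k → H i ≤ H j)
    (hpos : ∀ i < k, 0 < n i)
    (hdvd : ∀ i : ℕ, i + 1 < k → n i ∣ n (i + 1)) :
    (⨅ j ∈ Finset.range (k - 1), (smulSub (n 0) (H j) ⊔ smulSub (n (j + 1)) (H (k - 1)))) =
      ⨆ i ∈ Finset.range k, smulSub (n i) (H i) := by
  obtain ⟨m, rfl⟩ : ∃ m, k = m + 2 := ⟨k - 2, by omega⟩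
  exact le_antisymm (iInf_sup_le_iSup_smulSub hconv hmono hpos hdvd m (by omega))
    (iSup_smulSub_le_iInf_sup hmono hdvd)
end

section
/- Let G be a linearly ordered abelian group with finite spines, p a prime, H_0 ⊊ H_1 ⊊ … ⊊ H_{n-1} convex subgroups of G with H_n := G, and e_0 < e_1 < … < e_{n-2} positive integers. Set A_i = H_i + p^{e_i}G for i < n−1 and A_{n-1} = H_{n-1}. Then: (a) the index [⋂_{i<n-1}A_i : ⋂_{i<n}A_i] is always infinite; and (b) for every r < n−1, the index [⋂_{i<n, i≠r}A_i : ⋂_{i<n}A_i] is infinite if and only if the index [H_{r+1} : H_r + pH_{r+1}] is infinite. -/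
/-- `H_n(a)`: the largest convex subgroup `H` of `G` with `a ∉ H + nG` (equivalently the
union, i.e. supremum, of all such subgroups); it is the trivial subgroup when `a ∈ nG`. -/
def Hsub {G : Type*} [AddCommGroup G] [LinearOrder G] [IsOrderedAddMonoid G] (n : ℕ) (a : G) : AddSubgroup G :=
  sSup {H : AddSubgroup G | IsConvexSubgroup H ∧ a ∉ H ⊔ smulSub n ⊤}

open AddSubgroup

section Index

variable {G G' : Type*} [AddCommGroup G] [AddCommGroup G']

lemma mem_smulSub {n : ℕ} {H : AddSubgroup G} {x : G} :
    x ∈ smulSub n H ↔ ∃ h ∈ H, n • h = x := by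
  simp [smulSub, AddSubgroup.mem_map]

lemma smulSub_mono (n : ℕ) {H K : AddSubgroup G} (h : H ≤ K) : smulSub n H ≤ smulSub n K :=
  map_mono h

lemma smulSub_le_self (n : ℕ) (H : AddSubgroup G) : smulSub n H ≤ H := by
  rintro _ ⟨h, hh, rfl⟩
  exact H.nsmul_mem hh n

lemma smulSub_le_smulSub_of_dvd {a b : ℕ} (hab : a ∣ b) (H : AddSubgroup G) :
    smulSub b H ≤ smulSub a H := by
  obtain ⟨c, rfl⟩ := hab
  rintro _ ⟨h, hh, rfl⟩
  exact mem_smulSub.mpr ⟨c • h, H.nsmul_mem hh c, by simp [mul_nsmul']⟩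

lemma map_smulSub (a b : ℕ) (H : AddSubgroup G) :
    (smulSub b H).map (a • AddMonoidHom.id G) = smulSub (a * b) H := by
  rw [smulSub, smulSub, map_map]
  congr 1
  ext
  simp [mul_nsmul']

lemma relIndex_eq_zero_of_comap_inf_le (f : G →+ G') {L K : AddSubgroup G}
    {B C : AddSubgroup G'} (hpre : B.comap f ⊓ K ≤ L) (hKC : K.map f ≤ C)
    (h : L.relIndex K = 0) : B.relIndex C = 0 := by
  have hcomap : (B.comap f).relIndex K = 0 := by
    rw [← inf_relIndex_right]
    exact Nat.eq_zero_of_zero_dvd (h ▸ relIndex_dvd_of_le_left K hpre)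
  exact relIndex_eq_zero_of_le_right hKC (relIndex_comap B f K ▸ hcomap)

lemma relIndex_eq_zero_of_le_sup_map (f : G →+ G') {L K : AddSubgroup G}
    {B C : AddSubgroup G'} (hL : L.map f ≤ B) (hC : C ≤ B ⊔ K.map f)
    (h : B.relIndex C = 0) : L.relIndex K = 0 := by
  have hmap : B.relIndex (K.map f) = 0 := by
    rw [← relIndex_sup_left]
    exact relIndex_eq_zero_of_le_right hC h
  rw [← relIndex_comap] at hmap
  exact Nat.eq_zero_of_zero_dvd (hmap ▸ relIndex_dvd_of_le_left K (map_le_iff_le_comap.mp hL))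

/-- Multiplication by `p ^ s` maps `K / (Hr + p K)` onto `(Hr + p^s K) / (Hr + p^(s+1) K)`. -/
lemma relIndex_sup_smulSub_pow_ne_zero {p : ℕ} {Hr K : AddSubgroup G} (hHrK : Hr ≤ K)
    (h : (Hr ⊔ smulSub p K).relIndex K ≠ 0) (s : ℕ) :
    (Hr ⊔ smulSub (p ^ s) K).relIndex K ≠ 0 := by
  induction s with
  | zero =>
    rw [pow_zero, relIndex_eq_one.mpr (le_sup_of_le_right fun x hx => mem_smulSub.mpr ⟨x, hx, one_nsmul x⟩)]
    exact one_ne_zero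
  | succ s ih =>
    have hstep : (Hr ⊔ smulSub (p ^ (s + 1)) K).relIndex (Hr ⊔ smulSub (p ^ s) K) ≠ 0 := by
      refine fun h0 => h (relIndex_eq_zero_of_le_sup_map (p ^ s • AddMonoidHom.id G) ?_ ?_ h0)
      · rw [AddSubgroup.map_sup, map_smulSub, ← pow_succ]
        refine sup_le_sup (map_le_iff_le_comap.mpr fun x hx => ?_) le_rfl
        simpa using Hr.nsmul_mem hx _
      · exact sup_le_sup_right le_sup_left _
    rw [← relIndex_mul_relIndex _ _ K
      (sup_le_sup_left (smulSub_le_smulSub_of_dvd (pow_dvd_pow p s.le_succ) K) _)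
      (sup_le hHrK (smulSub_le_self _ K))]
    exact mul_ne_zero hstep ih

lemma relIndex_sup_smulSub_eq_zero_of_inf_relIndex_eq_zero {p s : ℕ}
    {Hr K A C : AddSubgroup G} (hHrK : Hr ≤ K) (hHrA : Hr ≤ A) (hpA : smulSub (p ^ s) ⊤ ≤ A)
    (hC : C ≤ K ⊔ A) (h : (A ⊓ C).relIndex C = 0) : (Hr ⊔ smulSub p K).relIndex K = 0 := by
  have hs : (Hr ⊔ smulSub (p ^ s) K).relIndex K = 0 := by
    refine relIndex_eq_zero_of_le_sup_map (AddMonoidHom.id G) (B := A) (C := C) ?_ ?_ ?_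
    · simpa using sup_le hHrA ((smulSub_mono _ le_top).trans hpA)
    · simpa [sup_comm] using hC
    · rwa [inf_relIndex_right] at h
  by_contra h1
  exact relIndex_sup_smulSub_pow_ne_zero hHrK h1 s hs

end Index

section Convex

variable {G : Type*} [AddCommGroup G] [LinearOrder G] [IsOrderedAddMonoid G] {H : AddSubgroup G}

lemma IsConvexSubgroup.mem_of_nsmul_mem_s9 (hH : IsConvexSubgroup H) {m : ℕ} (hm : m ≠ 0) {g : G}
    (h : m • g ∈ H) : g ∈ H := by
  wlog hg : 0 ≤ g generalizing g
  · simpa using this (g := -g) (by simpa using H.neg_mem h) (neg_nonneg.mpr (le_of_not_ge hg))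
  exact hH g (m • g) hg (le_self_nsmul hg hm) h

lemma IsConvexSubgroup.index_eq_zero (hH : IsConvexSubgroup H) (hne : H ≠ ⊤) : H.index = 0 := by
  obtain ⟨g, hg⟩ : ∃ g, g ∉ H := by simpa [eq_top_iff, SetLike.le_def] using hne
  by_contra h0
  exact hg (hH.mem_of_nsmul_mem_s9 h0 (H.nsmul_index_mem g))

/-- Write `q • d = a + (q * p) • g` with `a ∈ Hr`; then `d - p • g ∈ Hr` and `g ∈ K` by
convexity. -/
lemma IsConvexSubgroup.mem_sup_smulSub_of_nsmul_mem {Hr K : AddSubgroup G}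
    (hHr : IsConvexSubgroup Hr) (hK : IsConvexSubgroup K) (hle : Hr ≤ K) {p q : ℕ} (hp : p ≠ 0)
    (hq : q ≠ 0) {d : G} (hd : d ∈ K) (hqd : q • d ∈ Hr ⊔ smulSub (q * p) ⊤) :
    d ∈ Hr ⊔ smulSub p K := by
  obtain ⟨a, ha, _, ⟨g, -, rfl⟩, hsum⟩ := mem_sup.mp hqd
  have hdg : d - p • g ∈ Hr := by
    refine hHr.mem_of_nsmul_mem_s9 hq ?_
    have : q • (d - p • g) = a := by
      rw [smul_sub, ← hsum, ← mul_nsmul']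
      simp
    exact this ▸ ha
  have hg : g ∈ K := by
    refine hK.mem_of_nsmul_mem_s9 hp ?_
    simpa using K.sub_mem hd (hle hdg)
  rw [← sub_add_cancel d (p • g)]
  exact add_mem (mem_sup_left hdg) (mem_sup_right (mem_smulSub.mpr ⟨g, hg, rfl⟩))

lemma IsConvexSubgroup.relIndex_eq_zero_of_le (hH : IsConvexSubgroup H) (hne : H ≠ ⊤) {N : ℕ}
    (hN : N ≠ 0) {B C : AddSubgroup G} (hB : B ≤ H) (hC : smulSub N ⊤ ≤ C) : B.relIndex C = 0 :=
  relIndex_eq_zero_of_comap_inf_le (N • AddMonoidHom.id G) (L := H)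
    (fun _ hx => hH.mem_of_nsmul_mem_s9 hN (hB hx.1)) hC
    (by rw [relIndex_top_right, hH.index_eq_zero hne])

lemma IsConvexSubgroup.relIndex_eq_zero_of_relIndex_sup_smulSub_eq_zero {Hr K : AddSubgroup G}
    (hHr : IsConvexSubgroup Hr) (hK : IsConvexSubgroup K) (hle : Hr ≤ K) {p q : ℕ} (hp : p ≠ 0)
    (hq : q ≠ 0) {B C : AddSubgroup G} (hB : B ≤ Hr ⊔ smulSub (q * p) ⊤) (hC : smulSub q K ≤ C)
    (h : (Hr ⊔ smulSub p K).relIndex K = 0) : B.relIndex C = 0 :=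
  relIndex_eq_zero_of_comap_inf_le (q • AddMonoidHom.id G)
    (fun _ hd => hHr.mem_sup_smulSub_of_nsmul_mem hK hle hp hq hd.2 (hB hd.1)) hC h

end Convex

section Tower

variable {G : Type*} [AddCommGroup G] {H A : ℕ → AddSubgroup G} {e : ℕ → ℕ} {p n : ℕ}

lemma smulSub_pow_le_of_eq_sup (hA : ∀ i < n - 1, A i = H i ⊔ smulSub (p ^ e i) ⊤) {i k : ℕ}
    (hi : i < n - 1) (hk : e i ≤ k) : smulSub (p ^ k) ⊤ ≤ A i := by
  rw [hA i hi]
  exact (smulSub_le_smulSub_of_dvd (pow_dvd_pow p hk) ⊤).trans le_sup_right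

lemma le_of_eq_sup_of_eq_last (hA : ∀ i < n - 1, A i = H i ⊔ smulSub (p ^ e i) ⊤)
    (hAlast : A (n - 1) = H (n - 1)) {i : ℕ} (hi : i < n) : H i ≤ A i := by
  rcases lt_or_eq_of_le (Nat.le_sub_one_of_lt hi) with hi | rfl
  · exact hA i hi ▸ le_sup_left
  · exact hAlast.ge

lemma smulSub_le_biInf_range (hA : ∀ i < n - 1, A i = H i ⊔ smulSub (p ^ e i) ⊤)
    (hemono : ∀ i j : ℕ, i < j → j < n - 1 → e i < e j) :
    smulSub (p ^ e (n - 2)) ⊤ ≤ ⨅ i ∈ Finset.range (n - 1), A i := by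
  refine le_iInf₂ fun i hi => smulSub_pow_le_of_eq_sup hA (Finset.mem_range.mp hi) ?_
  rw [Finset.mem_range] at hi
  rcases lt_or_eq_of_le (Nat.le_sub_one_of_lt hi) with hi' | rfl
  · exact (hemono i _ hi' (by omega)).le
  · rfl

lemma biInf_erase_le_sup (hA : ∀ i < n - 1, A i = H i ⊔ smulSub (p ^ e i) ⊤)
    (hAlast : A (n - 1) = H (n - 1)) (hemono : ∀ i j : ℕ, i < j → j < n - 1 → e i < e j)
    {r : ℕ} (hr : r < n - 1) : ⨅ i ∈ (Finset.range n).erase r, A i ≤ H (r + 1) ⊔ A r := by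
  refine (biInf_le _ (show r + 1 ∈ (Finset.range n).erase r by simp; omega)).trans ?_
  rcases lt_or_eq_of_le (Nat.succ_le_of_lt hr) with hr1 | hr1
  · rw [hA (r + 1) hr1]
    exact sup_le_sup_left (smulSub_pow_le_of_eq_sup hA hr (hemono r _ r.lt_succ_self hr1).le) _
  · rw [show r + 1 = n - 1 from hr1, hAlast]
    exact le_sup_left

lemma smulSub_le_biInf_erase (hA : ∀ i < n - 1, A i = H i ⊔ smulSub (p ^ e i) ⊤)
    (hAlast : A (n - 1) = H (n - 1)) (hchain : ∀ i j : ℕ, i < j → j ≤ n → H i < H j)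
    (hemono : ∀ i j : ℕ, i < j → j < n - 1 → e i < e j) {r : ℕ} (hr : r < n - 1) :
    smulSub (p ^ (e r - 1)) (H (r + 1)) ≤ ⨅ i ∈ (Finset.range n).erase r, A i := by
  refine le_iInf₂ fun i hi => ?_
  simp only [Finset.mem_erase, Finset.mem_range] at hi
  rcases lt_or_gt_of_ne hi.1 with hir | hir
  · exact (smulSub_mono _ le_top).trans
      (smulSub_pow_le_of_eq_sup hA (by omega) (Nat.le_sub_one_of_lt (hemono i r hir hr)))
  · have hHi : H (r + 1) ≤ H i := by
      rcases Nat.lt_or_eq_of_le hir with hlt | rfl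
      · exact (hchain _ i hlt hi.2.le).le
      · rfl
    exact (smulSub_le_self _ _).trans (hHi.trans (le_of_eq_sup_of_eq_last hA hAlast hi.2))

end Tower

theorem relindex_inf_infinite_with_top_exponent_general {G : Type*} [AddCommGroup G] [LinearOrder G] [IsOrderedAddMonoid G]
    (p : ℕ) (hp : p.Prime) (n : ℕ) (hn : 1 ≤ n) (H : ℕ → AddSubgroup G)
    (hconv : ∀ i < n, IsConvexSubgroup (H i))
    (hchain : ∀ i j : ℕ, i < j → j ≤ n → H i < H j)
    (hHn : H n = ⊤)
    (e : ℕ → ℕ) (hepos : ∀ i < n - 1, 0 < e i)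
    (hemono : ∀ i j : ℕ, i < j → j < n - 1 → e i < e j)
    (A : ℕ → AddSubgroup G)
    (hA : ∀ i < n - 1, A i = H i ⊔ smulSub (p ^ e i) ⊤)
    (hAlast : A (n - 1) = H (n - 1)) :
    ((⨅ i ∈ Finset.range n, A i).relIndex (⨅ i ∈ Finset.range (n - 1), A i) = 0) ∧
      ∀ r < n - 1,
        (((⨅ i ∈ Finset.range n, A i).relIndex (⨅ i ∈ (Finset.range n).erase r, A i) = 0) ↔
          ((H r ⊔ smulSub p (H (r + 1))).relIndex (H (r + 1)) = 0)) := by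
  have hp0 : p ≠ 0 := hp.ne_zero
  have hlast : H (n - 1) ≠ ⊤ := hHn ▸ (hchain (n - 1) n (by omega) le_rfl).ne
  refine ⟨(hconv _ (by omega)).relIndex_eq_zero_of_le hlast (pow_ne_zero _ hp0)
    ((biInf_le _ (by simp; omega)).trans hAlast.le) (smulSub_le_biInf_range hA hemono),
    fun r hr => ?_⟩
  have hsplit : ⨅ i ∈ Finset.range n, A i = A r ⊓ ⨅ i ∈ (Finset.range n).erase r, A i := by
    rw [← Finset.iInf_insert, Finset.insert_erase (by simp; omega)]
  have hHr : H r ≤ H (r + 1) := (hchain r (r + 1) r.lt_succ_self (by omega)).le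
  constructor
  · refine fun h => relIndex_sup_smulSub_eq_zero_of_inf_relIndex_eq_zero hHr
      (le_of_eq_sup_of_eq_last hA hAlast (by omega)) (smulSub_pow_le_of_eq_sup hA hr le_rfl)
      (biInf_erase_le_sup hA hAlast hemono hr) (by rwa [hsplit] at h)
  · refine (hconv r (by omega)).relIndex_eq_zero_of_relIndex_sup_smulSub_eq_zero
      (hconv (r + 1) (by omega)) hHr hp0 (pow_ne_zero (e r - 1) hp0) ?_
      (smulSub_le_biInf_erase hA hAlast hchain hemono hr)
    rw [pow_sub_one_mul (hepos r hr).ne', ← hA r hr]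
    exact biInf_le _ (by simp; omega)

/-- Let `G` be a linearly ordered abelian group with finite spines, `p` a prime,
`H 0 ⊊ … ⊊ H (n-1)` convex subgroups with `H n = G`, and `e 0 < … < e (n-2)` positive
integers.  Set `A i = H i + p^(e i) G` for `i < n - 1` and `A (n-1) = H (n-1)`
(the case `e (n-1) = ∞`).  Then:
(a) the index `[⋂_{i<n-1} A i : ⋂_{i<n} A i]` is always infinite; and
(b) for every `r < n - 1`, the index `[⋂_{i<n, i≠r} A i : ⋂_{i<n} A i]` is infinite iff
the index `[H (r+1) : H r + p H (r+1)]` is infinite.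
(Infinite index is expressed by `AddSubgroup.relindex … = 0`.) -/
theorem relindex_inf_infinite_with_top_exponent {G : Type*} [AddCommGroup G] [LinearOrder G] [IsOrderedAddMonoid G]
    (hfs : ∀ q : ℕ, q.Prime → {H : AddSubgroup G | ∃ a : G, H = Hsub q a}.Finite)
    (p : ℕ) (hp : p.Prime) (n : ℕ) (hn : 1 ≤ n) (H : ℕ → AddSubgroup G)
    (hconv : ∀ i < n, IsConvexSubgroup (H i))
    (hchain : ∀ i j : ℕ, i < j → j ≤ n → H i < H j)
    (hHn : H n = ⊤)
    (e : ℕ → ℕ) (hepos : ∀ i < n - 1, 0 < e i)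
    (hemono : ∀ i j : ℕ, i < j → j < n - 1 → e i < e j)
    (A : ℕ → AddSubgroup G)
    (hA : ∀ i < n - 1, A i = H i ⊔ smulSub (p ^ e i) ⊤)
    (hAlast : A (n - 1) = H (n - 1)) :
    ((⨅ i ∈ Finset.range n, A i).relIndex (⨅ i ∈ Finset.range (n - 1), A i) = 0) ∧
      ∀ r < n - 1,
        (((⨅ i ∈ Finset.range n, A i).relIndex (⨅ i ∈ (Finset.range n).erase r, A i) = 0) ↔
          ((H r ⊔ smulSub p (H (r + 1))).relIndex (H (r + 1)) = 0)) :=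
  relindex_inf_infinite_with_top_exponent_general p hp n hn H hconv hchain hHn e hepos hemono A hA
    hAlast
end
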